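/- arXiv:2101.03162 — 4 statements merged into one kernel-verified Lean document; each statement's English description precedes it below -/
import Mathlib

section
/- For every real z ≥ 0: erf(z) = 1 - (2/π) ∫_0^{π/2} exp(-z²/ sin(ψ)²) dψ. -/
open MeasureTheory Real Set Function

/-! Differentiating in `x` gives
`1 - exp (-z²/sin²ψ) = ∫₀ᶻ (2x/sin²ψ) exp (-x²/sin²ψ) dx`. Integrate
over `ψ ∈ (0, π/2)` and swap the order (the integrand is nonnegative). The substitution
`ψ = π/2 - arctan t`, under which `sin²ψ = 1/(1+t²)` and `dψ = -dt/(1+t²)`, turns the inner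
integral into the half-line Gaussian integral `2x e^{-x²} ∫₀^∞ e^{-x²t²} dt = √π e^{-x²}`, so
`π/2 - ∫₀^{π/2} exp (-z²/sin²ψ) dψ = √π ∫₀ᶻ e^{-x²} dx`. -/

theorem hasDerivAt_exp_neg_sq_div (a x : ℝ) :
    HasDerivAt (fun x => exp (-x ^ 2 / a)) (-(2 * x / a * exp (-x ^ 2 / a))) x := by
  convert ((hasDerivAt_pow 2 x).fun_neg.div_const a).exp using 1
  push_cast
  ring

theorem integral_two_mul_div_mul_exp_neg_sq_div (a z : ℝ) :
    ∫ x in 0..z, 2 * x / a * exp (-x ^ 2 / a) = 1 - exp (-z ^ 2 / a) := by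
  rw [intervalIntegral.integral_eq_sub_of_hasDerivAt (f := fun x => -exp (-x ^ 2 / a))
    (fun x _ => by simpa using (hasDerivAt_exp_neg_sq_div a x).fun_neg)
    (Continuous.intervalIntegrable (by fun_prop) _ _)]
  simp only [ne_eq, OfNat.ofNat_ne_zero, not_false_eq_true, zero_pow, neg_zero, zero_div,
    exp_zero, sub_neg_eq_add]
  ring

theorem image_pi_div_two_sub_arctan_Ioi :
    (fun t => π / 2 - arctan t) '' Ioi 0 = Ioo 0 (π / 2) := by
  ext ψ
  constructor
  · rintro ⟨t, ht, rfl⟩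
    exact ⟨sub_pos.2 (arctan_lt_pi_div_two t), by linarith [arctan_pos.2 (mem_Ioi.1 ht)]⟩
  · rintro ⟨h0, hπ⟩
    refine ⟨tan (π / 2 - ψ), tan_pos_of_pos_of_lt_pi_div_two (by linarith) (by linarith), ?_⟩
    simp only
    rw [arctan_tan (by linarith) (by linarith)]
    ring

theorem integral_Ioo_two_mul_div_sin_sq_mul_exp {x : ℝ} (hx : 0 < x) :
    ∫ ψ in Ioo 0 (π / 2), 2 * x / sin ψ ^ 2 * exp (-x ^ 2 / sin ψ ^ 2) =
      √π * exp (-x ^ 2) := by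
  rw [← image_pi_div_two_sub_arctan_Ioi,
    integral_image_eq_integral_abs_deriv_smul measurableSet_Ioi
      (fun t _ => ((hasDerivAt_arctan' t).const_sub (π / 2)).hasDerivWithinAt)
      (fun s _ t _ h => arctan_injective (sub_right_injective h))]
  have hintegrand (t : ℝ) : |-(1 + t ^ 2)⁻¹| •
      (2 * x / sin (π / 2 - arctan t) ^ 2 * exp (-x ^ 2 / sin (π / 2 - arctan t) ^ 2)) =
        2 * x * exp (-x ^ 2) * exp (-(x ^ 2) * t ^ 2) := by
    rw [sin_pi_div_two_sub, cos_sq_arctan, abs_neg, abs_of_pos (by positivity), smul_eq_mul,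
      mul_assoc, ← exp_add]
    field_simp
    ring_nf
  simp_rw [hintegrand]
  rw [integral_const_mul, integral_gaussian_Ioi, sqrt_div pi_pos.le, sqrt_sq hx.le]
  field_simp

theorem integrableOn_exp_neg_sq_div_sin_sq (z : ℝ) {s : Set ℝ} (hs : volume s ≠ ⊤) :
    IntegrableOn (fun ψ => exp (-z ^ 2 / sin ψ ^ 2)) s := by
  refine Measure.integrableOn_of_bounded (M := 1) hs
    (Measurable.aestronglyMeasurable (by fun_prop)) (ae_of_all _ fun ψ => ?_)
  rw [norm_of_nonneg (exp_pos _).le, exp_le_one_iff, neg_div, neg_nonpos]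
  positivity

theorem integrable_prod_two_mul_div_sin_sq_mul_exp {z : ℝ} (hz : 0 ≤ z) :
    Integrable (uncurry fun ψ x => 2 * x / sin ψ ^ 2 * exp (-x ^ 2 / sin ψ ^ 2))
      ((volume.restrict (Ioc 0 (π / 2))).prod (volume.restrict (Ioc 0 z))) := by
  refine (integrable_prod_iff (Measurable.aestronglyMeasurable (by fun_prop))).2
    ⟨ae_of_all _ fun ψ => Continuous.integrableOn_Ioc
      (by simp only [uncurry_apply_pair]; fun_prop), ?_⟩
  have hnorm (ψ : ℝ) : ∫ x in Ioc 0 z, ‖2 * x / sin ψ ^ 2 * exp (-x ^ 2 / sin ψ ^ 2)‖ =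
      1 - exp (-z ^ 2 / sin ψ ^ 2) := by
    rw [← integral_two_mul_div_mul_exp_neg_sq_div, intervalIntegral.integral_of_le hz]
    refine setIntegral_congr_fun measurableSet_Ioc fun x hx => norm_of_nonneg ?_
    have := hx.1.le
    positivity
  simp_rw [uncurry_apply_pair, hnorm]
  exact (integrableOn_const (by simp)).sub (integrableOn_exp_neg_sq_div_sin_sq z (by simp))

theorem integral_exp_neg_sq_div_sin_sq {z : ℝ} (hz : 0 ≤ z) :
    ∫ ψ in 0..π / 2, exp (-z ^ 2 / sin ψ ^ 2) = π / 2 - √π * ∫ x in 0..z, exp (-x ^ 2) := by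
  have hπ : 0 ≤ π / 2 := by positivity
  rw [eq_sub_iff_add_eq, ← eq_sub_iff_add_eq']
  calc √π * ∫ x in 0..z, exp (-x ^ 2)
      = ∫ x in Ioc 0 z, ∫ ψ in Ioc 0 (π / 2),
          2 * x / sin ψ ^ 2 * exp (-x ^ 2 / sin ψ ^ 2) := by
        rw [intervalIntegral.integral_of_le hz, ← integral_const_mul]
        refine (setIntegral_congr_fun measurableSet_Ioc fun x hx => ?_).symm
        rw [integral_Ioc_eq_integral_Ioo, integral_Ioo_two_mul_div_sin_sq_mul_exp hx.1]
    _ = ∫ ψ in Ioc 0 (π / 2), ∫ x in Ioc 0 z,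
          2 * x / sin ψ ^ 2 * exp (-x ^ 2 / sin ψ ^ 2) :=
        (integral_integral_swap (integrable_prod_two_mul_div_sin_sq_mul_exp hz)).symm
    _ = ∫ ψ in Ioc 0 (π / 2), (1 - exp (-z ^ 2 / sin ψ ^ 2)) := by
        simp_rw [← intervalIntegral.integral_of_le hz,
          integral_two_mul_div_mul_exp_neg_sq_div]
    _ = π / 2 - ∫ ψ in 0..π / 2, exp (-z ^ 2 / sin ψ ^ 2) := by
        have hone : IntegrableOn (fun _ => (1 : ℝ)) (Ioc 0 (π / 2)) :=
          integrableOn_const (by simp)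
        rw [integral_sub hone (integrableOn_exp_neg_sq_div_sin_sq z (by simp)),
          intervalIntegral.integral_of_le hπ]
        simp [hπ]

noncomputable def erf (x : ℝ) : ℝ := (2 / Real.sqrt π) * ∫ t in (0:ℝ)..x, Real.exp (-t ^ 2)

/-- Craig-type representation of the error function. -/
theorem erf_craig (z : ℝ) (hz : 0 ≤ z) :
    erf z = 1 - (2 / π) * ∫ ψ in (0:ℝ)..(π / 2), Real.exp (-z ^ 2 / Real.sin ψ ^ 2) := by
  rw [erf, integral_exp_neg_sq_div_sin_sq hz]
  field_simp
  linear_combination (-2 * ∫ t in (0:ℝ)..z, exp (-t ^ 2)) * sq_sqrt pi_pos.le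
end

section
/- Let G and V be independent random variables where G has density f_G(g) = 2g·e^{-g²} on g ≥ 0 (Rayleigh with scale 1/√2) and V has density L/(π√(1-v²)) on [cos(π/L), 1] with integer L ≥ 3. Then the product X = G·V has density f_X(x) = (L/√π)·e^{-x²}·erf(x·tan(π/L)) for x ≥ 0. -/
/-!
Independence turns the law of `G * V` into the multiplicative convolution of the two laws, whose
density at `x` is `∫ f_V(v) |v|⁻¹ f_G(x / v) dv`. For `x > 0` the substitution
`v = x / √(x² + t²)`, `t ∈ (0, x tan(π / L))` (that is, `v = cos θ` followed by `t = x tan θ`)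
turns `f_V(v) v⁻¹ f_G(x / v) dv` into `(2L / π) e^{-x²} e^{-t²} dt`, which integrates to the
error function.
-/

open MeasureTheory Real ProbabilityTheory

open Set
open scoped ENNReal

theorem lintegral_comp_mul_right_volume {a : ℝ} (ha : a ≠ 0) (F : ℝ → ℝ≥0∞) :
    ∫⁻ u, F (u * a) = ENNReal.ofReal |a⁻¹| * ∫⁻ x, F x := by
  rw [← smul_eq_mul, ← lintegral_smul_measure, ← Real.map_volume_mul_right ha]
  exact (lintegral_map_equiv F (MeasurableEquiv.mulRight₀ a ha)).symm

theorem withDensity_mconv_withDensity {f g : ℝ → ℝ≥0∞} (hf : Measurable f) (hg : Measurable g) :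
    volume.withDensity f ∗ₘ volume.withDensity g =
      volume.withDensity (fun x => ∫⁻ v, g v * ENNReal.ofReal |v⁻¹| * f (x / v)) := by
  refine Measure.ext_of_lintegral _ fun φ hφ => ?_
  have hinner : ∀ᵐ v, ∫⁻ u, f u * g v * φ (u * v) =
      ∫⁻ x, g v * ENNReal.ofReal |v⁻¹| * f (x / v) * φ x := by
    filter_upwards [Measure.ae_ne volume 0] with v hv
    calc ∫⁻ u, f u * g v * φ (u * v)
        = ∫⁻ u, (fun x => f (x / v) * φ x) (u * v) * g v := by
          simp only [mul_div_cancel_right₀ _ hv, mul_right_comm]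
      _ = ∫⁻ x, g v * ENNReal.ofReal |v⁻¹| * f (x / v) * φ x := by
          rw [lintegral_mul_const _ (by fun_prop),
            lintegral_comp_mul_right_volume hv (fun x => f (x / v) * φ x), mul_comm, ← mul_assoc,
            ← lintegral_const_mul _ (by fun_prop)]
          simp only [mul_assoc]
  calc ∫⁻ x, φ x ∂(volume.withDensity f ∗ₘ volume.withDensity g)
      = ∫⁻ p : ℝ × ℝ, f p.1 * g p.2 * φ (p.1 * p.2) := by
        rw [Measure.lintegral_mconv_eq_lintegral_prod hφ, prod_withDensity hf hg,
          Measure.volume_eq_prod,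
          lintegral_withDensity_eq_lintegral_mul _ (by fun_prop) (by fun_prop)]
        rfl
    _ = ∫⁻ v, ∫⁻ u, f u * g v * φ (u * v) := lintegral_prod_symm' _ (by fun_prop)
    _ = ∫⁻ v, ∫⁻ x, g v * ENNReal.ofReal |v⁻¹| * f (x / v) * φ x := lintegral_congr_ae hinner
    _ = ∫⁻ x, (∫⁻ v, g v * ENNReal.ofReal |v⁻¹| * f (x / v)) * φ x := by
        rw [lintegral_lintegral_swap (by fun_prop)]
        exact lintegral_congr fun x => lintegral_mul_const _ (by fun_prop)
    _ = _ := by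
        rw [lintegral_withDensity_eq_lintegral_mul _ (by fun_prop) hφ]
        rfl

noncomputable def rayleighPDF (g : ℝ) : ℝ := if 0 ≤ g then 2 * g * Real.exp (-g ^ 2) else 0

/-- The density of `cos Θ` for `Θ` uniform on `[0, π / L]`. -/
noncomputable def cosUniformPDF (L : ℕ) (v : ℝ) : ℝ :=
  if Real.cos (π / L) ≤ v ∧ v ≤ 1 then L / (π * Real.sqrt (1 - v ^ 2)) else 0

theorem measurable_rayleighPDF : Measurable rayleighPDF :=
  Measurable.ite measurableSet_Ici (by fun_prop) measurable_const

theorem measurable_cosUniformPDF (L : ℕ) : Measurable (cosUniformPDF L) :=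
  Measurable.ite (measurableSet_Ici.inter measurableSet_Iic) (by fun_prop) measurable_const

theorem rayleighPDF_of_nonpos {g : ℝ} (hg : g ≤ 0) : rayleighPDF g = 0 := by
  rcases hg.lt_or_eq with hg | rfl
  · exact if_neg hg.not_ge
  · simp [rayleighPDF]

theorem hasDerivAt_div_sqrt_sq_add_sq {x : ℝ} (hx : 0 < x) (t : ℝ) :
    HasDerivAt (fun t => x / √(x ^ 2 + t ^ 2))
      (-(x * t) / ((x ^ 2 + t ^ 2) * √(x ^ 2 + t ^ 2))) t := by
  have hu : 0 < x ^ 2 + t ^ 2 := by positivity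
  have hsqrt : HasDerivAt (fun t => √(x ^ 2 + t ^ 2)) (t / √(x ^ 2 + t ^ 2)) t := by
    refine (((hasDerivAt_pow 2 t).const_add (x ^ 2)).sqrt hu.ne').congr_deriv ?_
    field_simp
    norm_num
  refine ((hasDerivAt_const t x).div hsqrt (Real.sqrt_pos.mpr hu).ne').congr_deriv ?_
  rw [Real.sq_sqrt hu.le]
  field_simp
  ring

theorem strictAntiOn_div_sqrt_sq_add_sq {x : ℝ} (hx : 0 < x) :
    StrictAntiOn (fun t => x / √(x ^ 2 + t ^ 2)) (Ici 0) := by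
  intro s (hs : 0 ≤ s) t _ hst
  apply div_lt_div_of_pos_left hx (by positivity)
  apply Real.sqrt_lt_sqrt (by positivity)
  nlinarith

theorem image_div_sqrt_sq_add_sq {x α : ℝ} (hα₀ : 0 < α) (hα : α < π / 2) (hx : 0 < x) :
    (fun t => x / √(x ^ 2 + t ^ 2)) '' Ioo 0 (x * tan α) = Ioo (cos α) 1 := by
  have hcos : 0 < cos α := cos_pos_of_mem_Ioo ⟨by linarith, hα⟩
  have hb : 0 < x * tan α := mul_pos hx (tan_pos_of_pos_of_lt_pi_div_two hα₀ hα)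
  have hφb : x / √(x ^ 2 + (x * tan α) ^ 2) = cos α := by
    have : x ^ 2 + (x * tan α) ^ 2 = (x / cos α) ^ 2 := by
      rw [div_pow, ← mul_inv_cancel_left₀ (pow_ne_zero 2 hcos.ne') (x ^ 2),
        ← inv_one_add_tan_sq hcos.ne']
      field_simp
    rw [this, Real.sqrt_sq (by positivity)]
    field_simp
  have hφ0 : x / √(x ^ 2 + 0 ^ 2) = 1 := by
    rw [zero_pow two_ne_zero, add_zero, Real.sqrt_sq hx.le, div_self hx.ne']
  rw [ContinuousOn.image_Ioo_of_strictAntiOn hb.le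
    (fun t _ => (hasDerivAt_div_sqrt_sq_add_sq hx t).continuousAt.continuousWithinAt)
    ((strictAntiOn_div_sqrt_sq_add_sq hx).mono Icc_subset_Ici_self), hφb, hφ0]

theorem abs_deriv_mul_rayleighPDF {x t : ℝ} (hx : 0 < x) (ht : 0 < t) :
    |-(x * t) / ((x ^ 2 + t ^ 2) * √(x ^ 2 + t ^ 2))| *
      ((√(1 - (x / √(x ^ 2 + t ^ 2)) ^ 2))⁻¹ * (x / √(x ^ 2 + t ^ 2))⁻¹ *
        rayleighPDF (x / (x / √(x ^ 2 + t ^ 2))))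
      = 2 * exp (-x ^ 2) * exp (-t ^ 2) := by
  set s := √(x ^ 2 + t ^ 2)
  have hu : 0 < x ^ 2 + t ^ 2 := by positivity
  have hs : 0 < s := Real.sqrt_pos.mpr hu
  have hs2 : s ^ 2 = x ^ 2 + t ^ 2 := Real.sq_sqrt hu.le
  have hxs : x / (x / s) = s := by field_simp
  have h1 : √(1 - (x / s) ^ 2) = t / s := by
    rw [show 1 - (x / s) ^ 2 = (t / s) ^ 2 by field_simp; linarith, Real.sqrt_sq (by positivity)]
  have hexp : exp (-s ^ 2) = exp (-x ^ 2) * exp (-t ^ 2) := by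
    rw [hs2, ← Real.exp_add]; ring_nf
  rw [hxs, h1, rayleighPDF, if_pos hs.le, hexp, abs_div, abs_neg,
    abs_of_pos (by positivity : 0 < x * t), abs_of_pos (by positivity : 0 < (x ^ 2 + t ^ 2) * s),
    ← hs2]
  field_simp

theorem setLIntegral_Ioo_cos_rayleighPDF {α x : ℝ} (hα₀ : 0 < α) (hα : α < π / 2) (hx : 0 < x) :
    ∫⁻ v in Ioo (cos α) 1, ENNReal.ofReal ((√(1 - v ^ 2))⁻¹ * v⁻¹ * rayleighPDF (x / v)) =
      ENNReal.ofReal (√π * exp (-x ^ 2) * erf (x * tan α)) := by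
  have hb : 0 < x * tan α := mul_pos hx (tan_pos_of_pos_of_lt_pi_div_two hα₀ hα)
  rw [← image_div_sqrt_sq_add_sq hα₀ hα hx,
    lintegral_image_eq_lintegral_abs_deriv_mul measurableSet_Ioo
      (fun t _ => (hasDerivAt_div_sqrt_sq_add_sq hx t).hasDerivWithinAt)
      ((strictAntiOn_div_sqrt_sq_add_sq hx).injOn.mono fun _ ht => ht.1.le)]
  calc _ = ∫⁻ t in Ioo 0 (x * tan α), ENNReal.ofReal (2 * exp (-x ^ 2) * exp (-t ^ 2)) :=
        setLIntegral_congr_fun measurableSet_Ioo fun t ht => by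
          rw [← ENNReal.ofReal_mul (abs_nonneg _), abs_deriv_mul_rayleighPDF hx ht.1]
    _ = ENNReal.ofReal (∫ t in Ioo 0 (x * tan α), 2 * exp (-x ^ 2) * exp (-t ^ 2)) :=
        (ofReal_integral_eq_lintegral_ofReal
          (((by fun_prop : Continuous fun t => 2 * exp (-x ^ 2) * exp (-t ^ 2)).integrableOn_Icc)
            |>.mono_set Ioo_subset_Icc_self)
          (Filter.Eventually.of_forall fun t => by positivity)).symm
    _ = ENNReal.ofReal (√π * exp (-x ^ 2) * erf (x * tan α)) := by
        rw [integral_const_mul, ← integral_Ioc_eq_integral_Ioo,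
          ← intervalIntegral.integral_of_le hb.le, erf]
        field_simp

theorem pi_div_natCast_mem_Ioo {L : ℕ} (hL : 3 ≤ L) : π / L ∈ Ioo 0 (π / 2) :=
  ⟨div_pos pi_pos (by positivity),
    div_lt_div_of_pos_left pi_pos two_pos (by exact_mod_cast (by omega : 2 < L))⟩

theorem cos_pi_div_natCast_pos {L : ℕ} (hL : 3 ≤ L) : 0 < cos (π / L) :=
  cos_pos_of_mem_Ioo ⟨by linarith [(pi_div_natCast_mem_Ioo hL).1, pi_pos],
    (pi_div_natCast_mem_Ioo hL).2⟩

theorem lintegral_cosUniformPDF_mul_rayleighPDF_eq_setLIntegral {L : ℕ} (hL : 3 ≤ L) (x : ℝ) :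
    ∫⁻ v, ENNReal.ofReal (cosUniformPDF L v) * ENNReal.ofReal |v⁻¹| *
        ENNReal.ofReal (rayleighPDF (x / v)) =
      ∫⁻ v in Ioo (cos (π / L)) 1, ENNReal.ofReal (L / π) *
        ENNReal.ofReal ((√(1 - v ^ 2))⁻¹ * v⁻¹ * rayleighPDF (x / v)) := by
  have hcos := cos_pi_div_natCast_pos hL
  have hsupp : (fun v => ENNReal.ofReal (cosUniformPDF L v) * ENNReal.ofReal |v⁻¹| *
      ENNReal.ofReal (rayleighPDF (x / v))).support ⊆ Icc (cos (π / L)) 1 := by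
    intro v hv
    by_contra hvI
    refine hv ?_
    simp only [cosUniformPDF, if_neg (show ¬(_ ∧ _) from hvI), ENNReal.ofReal_zero, zero_mul]
  rw [← setLIntegral_eq_of_support_subset hsupp, ← setLIntegral_congr Ioo_ae_eq_Icc]
  refine setLIntegral_congr_fun measurableSet_Ioo fun v hv => ?_
  have hv₀ : 0 < v := hcos.trans hv.1
  rw [cosUniformPDF, if_pos ⟨hv.1.le, hv.2.le⟩, abs_of_pos (inv_pos.mpr hv₀),
    ← ENNReal.ofReal_mul (by positivity), ← ENNReal.ofReal_mul (by positivity),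
    ← ENNReal.ofReal_mul (by positivity)]
  ring_nf

theorem lintegral_cosUniformPDF_mul_rayleighPDF {L : ℕ} (hL : 3 ≤ L) (x : ℝ) :
    ∫⁻ v, ENNReal.ofReal (cosUniformPDF L v) * ENNReal.ofReal |v⁻¹| *
        ENNReal.ofReal (rayleighPDF (x / v)) =
      ENNReal.ofReal (if 0 ≤ x then (L / √π) * exp (-x ^ 2) * erf (x * tan (π / L)) else 0) := by
  have hα := pi_div_natCast_mem_Ioo hL
  rw [lintegral_cosUniformPDF_mul_rayleighPDF_eq_setLIntegral hL]
  rcases le_or_gt x 0 with hx | hx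
  · have hrhs : (if 0 ≤ x then (L / √π) * exp (-x ^ 2) * erf (x * tan (π / L)) else 0) = 0 := by
      split_ifs with h
      · simp [le_antisymm hx h, erf]
      · rfl
    rw [hrhs, ENNReal.ofReal_zero]
    refine (setLIntegral_congr_fun measurableSet_Ioo fun v hv => ?_).trans lintegral_zero
    have hv₀ : 0 < v := (cos_pi_div_natCast_pos hL).trans hv.1
    rw [rayleighPDF_of_nonpos (div_nonpos_of_nonpos_of_nonneg hx hv₀.le), mul_zero,
      ENNReal.ofReal_zero, mul_zero]
  · rw [lintegral_const_mul' _ _ ENNReal.ofReal_ne_top,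
      setLIntegral_Ioo_cos_rayleighPDF hα.1 hα.2 hx, ← ENNReal.ofReal_mul (by positivity),
      if_pos hx.le]
    congr 1
    field_simp
    rw [Real.sq_sqrt pi_pos.le]

theorem product_density_rayleigh_cos {Ω : Type*} [MeasurableSpace Ω] (μ : Measure Ω)
    [IsProbabilityMeasure μ] (L : ℕ) (hL : 3 ≤ L) (G V : Ω → ℝ)
    (hG : Measurable G) (hV : Measurable V) (hindep : IndepFun G V μ)
    (hGd : Measure.map G μ = volume.withDensity (fun g => ENNReal.ofReal
      (if 0 ≤ g then 2 * g * Real.exp (-g ^ 2) else 0)))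
    (hVd : Measure.map V μ = volume.withDensity (fun v => ENNReal.ofReal
      (if Real.cos (π / L) ≤ v ∧ v ≤ 1 then L / (π * Real.sqrt (1 - v ^ 2)) else 0))) :
    Measure.map (fun ω => G ω * V ω) μ = volume.withDensity (fun x => ENNReal.ofReal
      (if 0 ≤ x then (L / Real.sqrt π) * Real.exp (-x ^ 2) * erf (x * Real.tan (π / L))
       else 0)) := by
  have hGd' : μ.map G = volume.withDensity fun g => ENNReal.ofReal (rayleighPDF g) := hGd
  have hVd' : μ.map V = volume.withDensity fun v => ENNReal.ofReal (cosUniformPDF L v) := hVd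
  calc μ.map (fun ω => G ω * V ω) = μ.map G ∗ₘ μ.map V := hindep.map_mul_eq_map_mconv_map hG hV
    _ = _ := by
      rw [hGd', hVd', withDensity_mconv_withDensity measurable_rayleighPDF.ennreal_ofReal
        (measurable_cosUniformPDF L).ennreal_ofReal]
      simp_rw [lintegral_cosUniformPDF_mul_rayleighPDF hL]
end

section
/- For every integer L ≥ 3, ∫_0^∞ [ L·e^{-2z} - (2L/π) ∫_0^{π/2} exp(-2z·√(1 + tan(π/L)²/sin(ψ)²)) dψ ] dz = 1, i.e., the function f_Z is a probability density on [0, ∞). -/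
/-!
With `θ = π / L`, the first term integrates to `L / 2`. In the second, swap the order of
integration (the integrand is dominated by `e^{-2z}`): the `z`-integral is
`1 / (2 √(1 + tan² θ / sin² ψ)) = sin ψ / (2 √(sin² ψ + tan² θ))`, which is the derivative of
`-½ arcsin (cos θ cos ψ)`, so the `ψ`-integral is `(π/2 - θ) / 2`. Hence the total is
`L/2 - (2L/π)(π/2 - θ)/2 = Lθ/π = 1`.
-/

open MeasureTheory Real Set

lemma integral_Ioi_exp_neg_mul {b : ℝ} (hb : 0 < b) :
    ∫ z in Ioi (0 : ℝ), exp (-b * z) = b⁻¹ := by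
  simpa [div_neg, neg_div] using integral_exp_mul_Ioi (neg_lt_zero.2 hb) 0

section ExpDecayFubini

variable {α : Type*} [MeasurableSpace α] {ν : Measure α} [IsFiniteMeasure ν] {c : α → ℝ} {m : ℝ}

lemma integrable_exp_neg_mul_prod (hc : Measurable c) (hm : 0 < m) (hcm : ∀ x, m ≤ c x) :
    Integrable (fun p : ℝ × α => exp (-c p.2 * p.1)) ((volume.restrict (Ioi 0)).prod ν) := by
  have hdom : Integrable (fun p : ℝ × α => exp (-m * p.1) * 1)
      ((volume.restrict (Ioi 0)).prod ν) :=
    (exp_neg_integrableOn_Ioi 0 hm).mul_prod (integrable_const 1)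
  refine hdom.mono (by fun_prop) ?_
  filter_upwards [Measure.quasiMeasurePreserving_fst.ae (ae_restrict_mem measurableSet_Ioi)]
    with p hp
  simp only [norm_eq_abs, abs_exp, mul_one, exp_le_exp, neg_mul, neg_le_neg_iff]
  exact mul_le_mul_of_nonneg_right (hcm p.2) (le_of_lt hp)

lemma integral_Ioi_integral_exp_neg_mul (hc : Measurable c) (hm : 0 < m) (hcm : ∀ x, m ≤ c x) :
    ∫ z in Ioi (0 : ℝ), ∫ x, exp (-c x * z) ∂ν = ∫ x, (c x)⁻¹ ∂ν := by
  rw [integral_integral_swap (integrable_exp_neg_mul_prod hc hm hcm)]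
  exact integral_congr_ae (ae_of_all _ fun x => integral_Ioi_exp_neg_mul (hm.trans_le (hcm x)))

end ExpDecayFubini

lemma hasDerivAt_arcsin_cos_div {a : ℝ} (ha : 1 < a) (ψ : ℝ) :
    HasDerivAt (fun ψ => arcsin (cos ψ / a)) (-sin ψ / √(a ^ 2 - cos ψ ^ 2)) ψ := by
  have ha0 : 0 < a := one_pos.trans ha
  have hlt : |cos ψ / a| < 1 := by
    rw [abs_div, abs_of_pos ha0, div_lt_one ha0]
    exact (abs_cos_le_one ψ).trans_lt ha
  have hsqrt : √(1 - (cos ψ / a) ^ 2) = √(a ^ 2 - cos ψ ^ 2) / a := by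
    rw [div_pow, one_sub_div (by positivity), sqrt_div' _ (by positivity), sqrt_sq ha0.le]
  have h := (hasDerivAt_arcsin (by linarith [neg_abs_le (cos ψ / a)])
    (by linarith [le_abs_self (cos ψ / a)])).comp ψ ((hasDerivAt_cos ψ).div_const a)
  refine h.congr_deriv ?_
  rw [hsqrt]
  field_simp

lemma integral_sin_div_sqrt_sq_sub_cos_sq {a : ℝ} (ha : 1 < a) :
    ∫ ψ in (0 : ℝ)..(π / 2), sin ψ / √(a ^ 2 - cos ψ ^ 2) = arcsin a⁻¹ := by
  have hpos : ∀ ψ, 0 < a ^ 2 - cos ψ ^ 2 := fun ψ => by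
    nlinarith [cos_sq_le_one ψ]
  have hcont : Continuous fun ψ => sin ψ / √(a ^ 2 - cos ψ ^ 2) :=
    continuous_sin.div (by fun_prop) fun ψ => (sqrt_pos.2 (hpos ψ)).ne'
  have hderiv : ∀ ψ ∈ uIcc 0 (π / 2), HasDerivAt (fun ψ => -arcsin (cos ψ / a))
      (sin ψ / √(a ^ 2 - cos ψ ^ 2)) ψ := fun ψ _ => by
    have h := (hasDerivAt_arcsin_cos_div ha ψ).neg
    rwa [neg_div, neg_neg] at h
  rw [intervalIntegral.integral_eq_sub_of_hasDerivAt hderiv (hcont.intervalIntegrable _ _)]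
  simp

lemma integral_inv_sqrt_one_add_tan_sq_div_sin_sq {θ : ℝ} (hθ₀ : 0 < θ) (hθ : θ < π / 2) :
    ∫ ψ in (0 : ℝ)..(π / 2), (√(1 + tan θ ^ 2 / sin ψ ^ 2))⁻¹ = π / 2 - θ := by
  set a := √(1 + tan θ ^ 2)
  have hcos : 0 < cos θ := cos_pos_of_mem_Ioo ⟨by linarith, hθ⟩
  have ha_inv : a⁻¹ = cos θ := inv_sqrt_one_add_tan_sq hcos
  have ha : 1 < a := by
    have htan : 0 < tan θ := tan_pos_of_pos_of_lt_pi_div_two hθ₀ hθ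
    exact (lt_sqrt zero_le_one).2 (by nlinarith)
  have hintegrand : ∀ ψ ∈ Ioo 0 π,
      (√(1 + tan θ ^ 2 / sin ψ ^ 2))⁻¹ = sin ψ / √(a ^ 2 - cos ψ ^ 2) := fun ψ hψ => by
    have hsin : 0 < sin ψ := sin_pos_of_pos_of_lt_pi hψ.1 hψ.2
    have hsq : a ^ 2 - cos ψ ^ 2 = sin ψ ^ 2 + tan θ ^ 2 := by
      rw [sq_sqrt (by positivity)]
      linarith [sin_sq_add_cos_sq ψ]
    rw [hsq, one_add_div (by positivity), add_comm, sqrt_div' _ (by positivity),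
      sqrt_sq hsin.le, inv_div]
  calc ∫ ψ in (0 : ℝ)..(π / 2), (√(1 + tan θ ^ 2 / sin ψ ^ 2))⁻¹
      = ∫ ψ in (0 : ℝ)..(π / 2), sin ψ / √(a ^ 2 - cos ψ ^ 2) := by
        refine intervalIntegral.integral_congr_ae (ae_of_all _ fun ψ hψ => hintegrand ψ ?_)
        rw [uIoc_of_le (by positivity)] at hψ
        exact ⟨hψ.1, hψ.2.trans_lt (by linarith [pi_pos])⟩
    _ = arcsin (cos θ) := by rw [integral_sin_div_sqrt_sq_sub_cos_sq ha, ha_inv]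
    _ = π / 2 - θ := by
        rw [← sin_pi_div_two_sub]
        exact arcsin_sin (by linarith) (by linarith)

theorem density_integrates_to_one (L : ℕ) (hL : 3 ≤ L) :
    ∫ z in Set.Ioi (0:ℝ),
        (L * Real.exp (-2 * z) - (2 * L / π) * ∫ ψ in (0:ℝ)..(π / 2),
          Real.exp (-2 * z * Real.sqrt (1 + Real.tan (π / L) ^ 2 / Real.sin ψ ^ 2)))
      = 1 := by
  have hL' : (3 : ℝ) ≤ L := by exact_mod_cast hL
  have hθ₀ : 0 < π / L := by positivity
  have hθ : π / L < π / 2 := div_lt_div_of_pos_left pi_pos two_pos (by linarith)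
  set c : ℝ → ℝ := fun ψ => 2 * √(1 + tan (π / L) ^ 2 / sin ψ ^ 2) with hc
  have hc_meas : Measurable c := by fun_prop
  have hc_ge : ∀ ψ, 2 ≤ c ψ := fun ψ => by
    have : 0 ≤ tan (π / L) ^ 2 / sin ψ ^ 2 := by positivity
    linarith [one_le_sqrt.2 (le_add_of_nonneg_right this)]
  have hinner : ∀ z, ∫ ψ in (0 : ℝ)..(π / 2), exp (-2 * z * √(1 + tan (π / L) ^ 2 / sin ψ ^ 2))
      = ∫ ψ in Ioc 0 (π / 2), exp (-c ψ * z) := fun z => by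
    rw [intervalIntegral.integral_of_le (by positivity)]
    congr with ψ
    rw [hc]
    ring_nf
  have hc_integral : ∫ ψ in Ioc 0 (π / 2), (c ψ)⁻¹ = (π / 2 - π / L) / 2 := by
    simp only [hc, mul_inv, integral_const_mul]
    rw [← intervalIntegral.integral_of_le (by positivity),
      integral_inv_sqrt_one_add_tan_sq_div_sin_sq hθ₀ hθ]
    ring
  simp_rw [hinner]
  rw [integral_sub ((exp_neg_integrableOn_Ioi 0 two_pos).const_mul _)
      ((integrable_exp_neg_mul_prod hc_meas two_pos hc_ge).integral_prod_left.const_mul _),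
    integral_const_mul, integral_const_mul, integral_Ioi_exp_neg_mul two_pos,
    integral_Ioi_integral_exp_neg_mul hc_meas two_pos hc_ge, hc_integral]
  field_simp
  ring
end

section
/- For every integer N ≥ 1 and ρ > 0: (1/2)∫_0^∞ erfc(√(ρ g)) · (2^{N-1} g^{N/2-1} e^{-2√g} / Γ(N)) dg ≤ (2^{N-1} Γ(N/2 + 1/2) / (√π Γ(N+1))) · ρ^{-N/2} · (1 + o(1)) as ρ → ∞; more precisely lim_{ρ→∞} ρ^{N/2} · (1/2)∫_0^∞ erfc(√(ρg)) f_γ(g) dg = 2^{N-1} Γ(N/2 + 1/2)/(√π Γ(N+1)). -/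
open MeasureTheory Real Filter

/-- The complementary error function. -/
noncomputable def erfc (x : ℝ) : ℝ := 1 - erf x

/-!
Substituting `u = ρ g` turns `ρ^{N/2}` times the error probability into
`(c/2) ∫₀^∞ erfc(√u) u^{N/2-1} e^{-2√(u/ρ)} du` with `c = 2^{N-1}/Γ(N)`.
The factor `e^{-2√(u/ρ)}` is bounded by `1` and tends to `1`, so by dominated convergence (the
Gaussian tail of `erfc` supplies the integrable majorant) the limit is
`(c/2) ∫₀^∞ erfc(√u) u^{N/2-1} du`. This Mellin transform of `erfc ∘ √` equals
`Γ(s + 1/2)/(s√π)` at `s = N/2`, by one integration by parts.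
-/

open Set Topology

lemma hasDerivAt_erf (y : ℝ) : HasDerivAt erf (2 / √π * exp (-y ^ 2)) y := by
  have hc : Continuous fun t : ℝ => exp (-t ^ 2) := by fun_prop
  exact ((intervalIntegral.integral_hasStrictDerivAt_right (hc.intervalIntegrable _ _)
    (hc.stronglyMeasurableAtFilter _ _) hc.continuousAt).hasDerivAt).const_mul _

lemma continuous_erfc : Continuous erfc :=
  continuous_const.sub <| continuous_iff_continuousAt.mpr fun y => (hasDerivAt_erf y).continuousAt

lemma integrableOn_exp_neg_sq (c : ℝ) : IntegrableOn (fun t : ℝ => exp (-t ^ 2)) (Ioi c) := by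
  simpa using (integrable_exp_neg_mul_sq one_pos).integrableOn (s := Ioi c)

lemma erfc_eq_integral_Ioi {y : ℝ} (hy : 0 ≤ y) :
    erfc y = 2 / √π * ∫ t in Ioi y, exp (-t ^ 2) := by
  have hsplit : (∫ t in Ioc 0 y, exp (-t ^ 2)) + ∫ t in Ioi y, exp (-t ^ 2) = √π / 2 := by
    rw [← setIntegral_union (Ioc_disjoint_Ioi le_rfl) measurableSet_Ioi
      ((integrableOn_exp_neg_sq 0).mono_set Ioc_subset_Ioi_self) (integrableOn_exp_neg_sq y),
      Ioc_union_Ioi_eq_Ioi hy]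
    simpa using integral_gaussian_Ioi 1
  rw [erfc, erf, intervalIntegral.integral_of_le hy, eq_sub_of_add_eq' hsplit]
  field_simp

lemma erf_nonneg {y : ℝ} (hy : 0 ≤ y) : 0 ≤ erf y :=
  mul_nonneg (by positivity) (intervalIntegral.integral_nonneg hy fun t _ => (exp_pos _).le)

lemma erfc_le_one {y : ℝ} (hy : 0 ≤ y) : erfc y ≤ 1 :=
  sub_le_self _ (erf_nonneg hy)

lemma erfc_nonneg {y : ℝ} (hy : 0 ≤ y) : 0 ≤ erfc y := by
  rw [erfc_eq_integral_Ioi hy]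
  exact mul_nonneg (by positivity)
    (setIntegral_nonneg measurableSet_Ioi fun t _ => (exp_pos _).le)

/-- On `t > y ≥ 0` one has `e^{-t²} ≤ e^{-y²/2} e^{-t²/2}`, and the remaining tail of
`e^{-t²/2}` is at most `∫₀^∞ e^{-t²/2} = √(2π)/2`. -/
lemma erfc_le_sqrt_two_mul_exp {y : ℝ} (hy : 0 ≤ y) : erfc y ≤ √2 * exp (-y ^ 2 / 2) := by
  have hg : IntegrableOn (fun t : ℝ => exp (-(1 / 2) * t ^ 2)) (Ioi y) :=
    (integrable_exp_neg_mul_sq (by norm_num)).integrableOn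
  have htail : (∫ t in Ioi y, exp (-t ^ 2)) ≤
      exp (-y ^ 2 / 2) * ∫ t in Ioi y, exp (-(1 / 2) * t ^ 2) := by
    rw [← integral_const_mul]
    refine setIntegral_mono_on (integrableOn_exp_neg_sq y) (hg.const_mul _) measurableSet_Ioi
      fun t (ht : y < t) => ?_
    rw [← exp_add, exp_le_exp]
    nlinarith
  have hhalf : (∫ t in Ioi y, exp (-(1 / 2) * t ^ 2)) ≤ √2 * √π / 2 := by
    calc (∫ t in Ioi y, exp (-(1 / 2) * t ^ 2)) ≤ ∫ t in Ioi 0, exp (-(1 / 2) * t ^ 2) :=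
          setIntegral_mono_set (integrable_exp_neg_mul_sq (by norm_num)).integrableOn
            (.of_forall fun t => (exp_pos _).le) (Ioi_subset_Ioi hy).eventuallyLE
      _ = √2 * √π / 2 := by
          rw [integral_gaussian_Ioi, ← sqrt_mul zero_le_two]
          norm_num [mul_comm]
  have hπ : 0 < √π := sqrt_pos.mpr pi_pos
  rw [erfc_eq_integral_Ioi hy]
  calc 2 / √π * ∫ t in Ioi y, exp (-t ^ 2)
        ≤ 2 / √π * (exp (-y ^ 2 / 2) * (√2 * √π / 2)) := by
        gcongr
        exact htail.trans (mul_le_mul_of_nonneg_left hhalf (exp_pos _).le)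
    _ = √2 * exp (-y ^ 2 / 2) := by field_simp

lemma erfc_sqrt_le_sqrt_two_mul_exp {x : ℝ} (hx : 0 ≤ x) : erfc √x ≤ √2 * exp (-x / 2) := by
  simpa [sq_sqrt hx] using erfc_le_sqrt_two_mul_exp (sqrt_nonneg x)

lemma integrableOn_erfc_sqrt_mul_rpow {s : ℝ} (hs : 0 < s) :
    IntegrableOn (fun x => erfc √x * x ^ (s - 1)) (Ioi 0) := by
  have hdom : IntegrableOn (fun x : ℝ => √2 * (x ^ (s - 1) * exp (-(1 / 2) * x ^ (1 : ℝ))))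
      (Ioi 0) :=
    (integrableOn_rpow_mul_exp_neg_mul_rpow (by linarith) one_pos (by norm_num)).const_mul _
  refine hdom.mono' ?_
    ((ae_restrict_iff' measurableSet_Ioi).mpr (.of_forall fun x (hx : 0 < x) => ?_))
  · exact ((continuous_erfc.comp continuous_sqrt).continuousOn.mul
      (continuousOn_id.rpow_const fun x (hx : 0 < x) => .inl hx.ne')).aestronglyMeasurable
      measurableSet_Ioi
  · rw [norm_of_nonneg (mul_nonneg (erfc_nonneg (sqrt_nonneg x)) (rpow_nonneg hx.le _)),
      rpow_one]
    calc erfc √x * x ^ (s - 1) ≤ √2 * exp (-x / 2) * x ^ (s - 1) := by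
          gcongr
          exact erfc_sqrt_le_sqrt_two_mul_exp hx.le
      _ = _ := by ring_nf

lemma hasDerivAt_erfc_sqrt {x : ℝ} (hx : 0 < x) :
    HasDerivAt (fun x => erfc √x) (-(exp (-x) * x ^ (-(1 / 2) : ℝ) / √π)) x := by
  have h := ((hasDerivAt_erf √x).comp x (hasDerivAt_sqrt hx.ne')).const_sub 1
  refine h.congr_deriv ?_
  rw [sq_sqrt hx.le, rpow_neg hx.le, ← sqrt_eq_rpow]
  field_simp

lemma tendsto_erfc_sqrt_mul_rpow_nhdsGT_zero {s : ℝ} (hs : 0 < s) :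
    Tendsto (fun x => erfc √x * x ^ s) (𝓝[>] 0) (𝓝 0) := by
  have hpow : Tendsto (fun x : ℝ => x ^ s) (𝓝[>] 0) (𝓝 0) := by
    simpa [zero_rpow hs.ne'] using
      (continuousAt_rpow_const 0 s (.inr hs.le)).tendsto.mono_left nhdsWithin_le_nhds
  refine squeeze_zero' ?_ ?_ hpow <;> filter_upwards [self_mem_nhdsWithin] with x (hx : 0 < x)
  · exact mul_nonneg (erfc_nonneg (sqrt_nonneg x)) (rpow_nonneg hx.le _)
  · exact mul_le_of_le_one_left (rpow_nonneg hx.le _) (erfc_le_one (sqrt_nonneg x))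

lemma tendsto_erfc_sqrt_mul_rpow_atTop (s : ℝ) :
    Tendsto (fun x => erfc √x * x ^ s) atTop (𝓝 0) := by
  have hdecay :=
    (tendsto_rpow_mul_exp_neg_mul_atTop_nhds_zero s (1 / 2) one_half_pos).const_mul √2
  rw [mul_zero] at hdecay
  refine squeeze_zero' ?_ ?_ hdecay <;> filter_upwards [eventually_gt_atTop 0] with x hx
  · exact mul_nonneg (erfc_nonneg (sqrt_nonneg x)) (rpow_nonneg hx.le _)
  · calc erfc √x * x ^ s ≤ √2 * exp (-x / 2) * x ^ s := by
          gcongr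
          exact erfc_sqrt_le_sqrt_two_mul_exp hx.le
      _ = _ := by ring_nf

/-- Integrate by parts against `d(x^s/s)`: the derivative `-e^{-x}x^{-1/2}/√π` of `erfc √x`
turns the integral into a Gamma integral. -/
lemma integral_erfc_sqrt_mul_rpow {s : ℝ} (hs : 0 < s) :
    ∫ x in Ioi 0, erfc √x * x ^ (s - 1) = Gamma (s + 1 / 2) / (s * √π) := by
  have hv : ∀ x ∈ Ioi (0 : ℝ), HasDerivAt (fun x => x ^ s / s) (x ^ (s - 1)) x := fun x hx => by
    simpa [hs.ne'] using (hasDerivAt_rpow_const (p := s) (.inl (ne_of_gt hx))).div_const s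
  have hprod : ∀ x ∈ Ioi (0 : ℝ), -(exp (-x) * x ^ (-(1 / 2) : ℝ) / √π) * (x ^ s / s) =
      -(1 / (s * √π)) * (exp (-x) * x ^ (s + 1 / 2 - 1)) := fun x (hx : 0 < x) => by
    rw [show s + 1 / 2 - 1 = -(1 / 2) + s by ring, rpow_add hx]
    ring
  have hgamma : IntegrableOn (fun x => -(1 / (s * √π)) * (exp (-x) * x ^ (s + 1 / 2 - 1)))
      (Ioi 0) := (GammaIntegral_convergent (by linarith)).const_mul _
  have hboundary (l : Filter ℝ) (h : Tendsto (fun x => erfc √x * x ^ s) l (𝓝 0)) :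
      Tendsto (fun x => erfc √x * (x ^ s / s)) l (𝓝 0) := by
    simpa [mul_div_assoc] using h.div_const s
  rw [integral_Ioi_mul_deriv_eq_deriv_mul (fun x hx => hasDerivAt_erfc_sqrt hx) hv
      (integrableOn_erfc_sqrt_mul_rpow hs)
      (hgamma.congr_fun (fun x hx => (hprod x hx).symm) measurableSet_Ioi)
      (hboundary _ (tendsto_erfc_sqrt_mul_rpow_nhdsGT_zero hs))
      (hboundary _ (tendsto_erfc_sqrt_mul_rpow_atTop s)),
    setIntegral_congr_fun measurableSet_Ioi hprod, integral_const_mul,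
    ← Gamma_eq_integral (by linarith)]
  ring

lemma rpow_mul_integral_comp_mul_mul_rpow (F h : ℝ → ℝ) (s : ℝ) {ρ : ℝ} (hρ : 0 < ρ) :
    ρ ^ s * ∫ g in Ioi 0, F (ρ * g) * (g ^ (s - 1) * h g) =
      ∫ u in Ioi 0, F u * u ^ (s - 1) * h (u / ρ) := by
  have hsub :=
    integral_comp_mul_left_Ioi (fun u => F u * ((u / ρ) ^ (s - 1) * h (u / ρ))) 0 hρ
  simp only [mul_div_cancel_left₀ _ hρ.ne', mul_zero, smul_eq_mul] at hsub
  rw [hsub, ← mul_assoc, ← integral_const_mul]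
  refine setIntegral_congr_fun measurableSet_Ioi fun u (hu : 0 < u) => ?_
  rw [div_rpow hu.le hρ.le, rpow_sub_one hρ.ne']
  field_simp

lemma tendsto_integral_mul_comp_div_atTop {μ : Measure ℝ} {f h : ℝ → ℝ} (hf : Integrable f μ)
    (hh : Continuous h) {C : ℝ} (hC : ∀ x, |h x| ≤ C) :
    Tendsto (fun ρ => ∫ u, f u * h (u / ρ) ∂μ) atTop (𝓝 ((∫ u, f u ∂μ) * h 0)) := by
  rw [← integral_mul_const]
  refine tendsto_integral_filter_of_dominated_convergence (fun u => ‖f u‖ * C)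
    (.of_forall fun ρ => hf.aestronglyMeasurable.mul
      (by fun_prop : Continuous fun u => h (u / ρ)).aestronglyMeasurable)
    (.of_forall fun ρ => .of_forall fun u => ?_) (hf.norm.mul_const C) (.of_forall fun u => ?_)
  · rw [norm_mul]
    exact mul_le_mul_of_nonneg_left (hC _) (norm_nonneg _)
  · exact tendsto_const_nhds.mul ((hh.tendsto 0).comp (tendsto_const_nhds.div_atTop tendsto_id))

theorem high_snr_ber_L2 (N : ℕ) (hN : 1 ≤ N) :
    Tendsto (fun ρ : ℝ => ρ ^ ((N : ℝ) / 2) *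
        ((1 / 2) * ∫ g in Set.Ioi (0:ℝ), erfc (Real.sqrt (ρ * g)) *
          (2 ^ (N - 1) * g ^ ((N : ℝ) / 2 - 1) * Real.exp (-2 * Real.sqrt g) / Real.Gamma N)))
      atTop
      (nhds (2 ^ (N - 1) * Real.Gamma ((N : ℝ) / 2 + 1 / 2)
        / (Real.sqrt π * Real.Gamma ((N : ℝ) + 1)))) := by
  have hN0 : (0 : ℝ) < N := by exact_mod_cast hN
  set s : ℝ := (N : ℝ) / 2
  have hs : 0 < s := by positivity
  set c : ℝ := 2 ^ (N - 1) / Gamma N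
  have hscaled (ρ : ℝ) (hρ : 0 < ρ) : ρ ^ s * ((1 / 2) * ∫ g in Ioi 0,
        erfc √(ρ * g) * (2 ^ (N - 1) * g ^ (s - 1) * exp (-2 * √g) / Gamma N)) =
      c / 2 * ∫ u in Ioi 0, erfc √u * u ^ (s - 1) * exp (-2 * √(u / ρ)) := by
    have hpull : ∫ g in Ioi 0,
          erfc √(ρ * g) * (2 ^ (N - 1) * g ^ (s - 1) * exp (-2 * √g) / Gamma N) =
        c * ∫ g in Ioi 0, erfc √(ρ * g) * (g ^ (s - 1) * exp (-2 * √g)) := by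
      rw [← integral_const_mul]
      congr 1 with g
      ring
    rw [hpull, ← rpow_mul_integral_comp_mul_mul_rpow (fun x => erfc √x) (fun x => exp (-2 * √x))
      s hρ]
    ring
  have hexp_le (x : ℝ) : |exp (-2 * √x)| ≤ 1 := by
    rw [abs_of_pos (exp_pos _), exp_le_one_iff]
    linarith [sqrt_nonneg x]
  have hlim := tendsto_integral_mul_comp_div_atTop (integrableOn_erfc_sqrt_mul_rpow hs)
    (by fun_prop) hexp_le
  rw [integral_erfc_sqrt_mul_rpow hs, sqrt_zero, mul_zero, exp_zero, mul_one] at hlim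
  convert (hlim.const_mul (c / 2)).congr' ?_ using 2
  · simp only [c, s]
    rw [Gamma_add_one hN0.ne']
    field_simp
  · filter_upwards [eventually_gt_atTop 0] with ρ hρ
    exact (hscaled ρ hρ).symm
end
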